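/- Let n ≥ 3 and d ∈ Z_{2n−3}, and consider the binary code C_3(n;d) = {z ∈ Σ_2^n : Syn(z) ≡ d (mod 2n−3)}. Say z′ ∈ Σ_2^{n−1} is obtained from z ∈ Σ_2^n by a 00→1 error at position i if z_i = z_{i+1} = 0 and z′ = z_1⋯z_{i−1} 1 z_{i+2}⋯z_n. Then C_3(n;d) corrects the error type 00→1 and locates the error position: if z, w ∈ C_3(n;d), z′ is obtained from z by a 00→1 error at position i, w′ is obtained from w by a 00→1 error at position j, and z′ = w′, then z = w and i = j. -/

import Mathlib

/-- The VT syndrome `Syn(z) = Σ_{i=1}^{|z|} i·z_i` (positions are 1-indexed). -/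
def syn (z : List ℕ) : ℕ := ∑ i ∈ Finset.range z.length, (i + 1) * z.getD i 0

lemma sum_getD (l : List ℕ) : ∑ i ∈ Finset.range l.length, l.getD i 0 = l.sum := by
  induction l with
  | nil => simp
  | cons x l ih =>
    rw [List.length_cons, Finset.sum_range_succ']
    simp only [List.getD_cons_succ, List.getD_cons_zero, List.sum_cons, ih]
    omega

lemma syn_cons (x : ℕ) (l : List ℕ) : syn (x :: l) = x + syn l + l.sum := by
  unfold syn
  rw [List.length_cons, Finset.sum_range_succ']
  simp only [List.getD_cons_succ, List.getD_cons_zero]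
  have : ∀ k ∈ Finset.range l.length,
      (k + 1 + 1) * l.getD k 0 = (k + 1) * l.getD k 0 + l.getD k 0 := by
    intro k _; ring
  rw [Finset.sum_congr rfl this, Finset.sum_add_distrib, sum_getD]
  omega

lemma syn_append (a b : List ℕ) : syn (a ++ b) = syn a + a.length * b.sum + syn b := by
  induction a with
  | nil => simp [syn]
  | cons x a ih =>
    rw [List.cons_append, syn_cons, ih, syn_cons, List.sum_append, List.length_cons]
    ring

lemma decomp (l : List ℕ) (k : ℕ) (hk : k + 1 < l.length) :
    l = l.take k ++ l.getD k 0 :: l.getD (k+1) 0 :: l.drop (k+2) := by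
  conv_lhs => rw [← List.take_append_drop k l]
  congr 1
  rw [List.drop_eq_getElem_cons (show k < l.length by omega),
    List.drop_eq_getElem_cons (show k + 1 < l.length from hk),
    List.getD_eq_getElem l 0 (show k < l.length by omega),
    List.getD_eq_getElem l 0 hk]

lemma syn_err (z : List ℕ) (i : ℕ) (hi : i + 1 < z.length)
    (h0 : z.getD i 0 = 0) (h1 : z.getD (i+1) 0 = 0) :
    syn z + (i + 1) = syn (z.take i ++ 1 :: z.drop (i+2)) + (z.drop (i+2)).sum := by
  conv_lhs => rw [decomp z i hi, h0, h1]
  rw [syn_append, syn_append, syn_cons, syn_cons, syn_cons]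
  simp only [List.sum_cons, List.length_take]
  have : min i z.length = i := by omega
  rw [this]
  ring

lemma key (n : ℕ) (hn : 3 ≤ n)
    (z w : List ℕ)
    (hzlen : z.length = n) (hzb : ∀ e ∈ z, e < 2)
    (hwlen : w.length = n)
    (hzw : syn z ≡ syn w [MOD 2 * n - 3])
    (i j : ℕ) (hi : i + 1 < n) (hj : j + 1 < n)
    (hzi : z.getD i 0 = 0) (hzi1 : z.getD (i + 1) 0 = 0)
    (hwj : w.getD j 0 = 0) (hwj1 : w.getD (j + 1) 0 = 0)
    (heq : z.take i ++ 1 :: z.drop (i + 2) = w.take j ++ 1 :: w.drop (j + 2))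
    (hij : i ≤ j) : i = j := by
  set M := 2 * n - 3 with hM
  -- drop equality at j+2
  have hdropeq : z.drop (j + 2) = w.drop (j + 2) := by
    have h1 := congrArg (List.drop (j + 1)) heq
    have hti : (z.take i).length = i := by simp; omega
    have htj : (w.take j).length = j := by simp; omega
    have hL : List.drop (j + 1) (z.take i ++ 1 :: z.drop (i + 2)) = z.drop (j + 2) := by
      have : j + 1 = (z.take i).length + (j + 1 - i) := by omega
      rw [this, List.drop_length_add_append]
      have : j + 1 - i = (j - i) + 1 := by omega
      rw [this, List.drop_succ_cons, List.drop_drop]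
      congr 1; omega
    have hR : List.drop (j + 1) (w.take j ++ 1 :: w.drop (j + 2)) = w.drop (j + 2) := by
      have : j + 1 = (w.take j).length + 1 := by omega
      rw [this, List.drop_length_add_append, List.drop_succ_cons, List.drop_zero]
    rw [hL, hR] at h1
    exact h1
  -- middle sum
  set S := ((z.drop (i + 2)).take (j - i)).sum with hS
  have htsplit : (z.drop (i + 2)).sum = S + (w.drop (j + 2)).sum := by
    conv_lhs => rw [← List.take_append_drop (j - i) (z.drop (i+2)), List.sum_append]
    congr 2
    rw [List.drop_drop, ← hdropeq]
    congr 1; omega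
  have hSle : S ≤ j - i := by
    have := List.sum_le_card_nsmul ((z.drop (i+2)).take (j - i)) 1 (by
      intro x hx
      have hxz : x ∈ z := List.Sublist.subset ((List.take_sublist _ _).trans (List.drop_sublist _ _)) hx
      have := hzb x hxz; omega)
    have hlen : ((z.drop (i+2)).take (j - i)).length ≤ j - i := by
      simp
    simp only [smul_eq_mul, mul_one] at this
    omega
  -- syndrome equations
  have e1 := syn_err z i (by omega) hzi hzi1
  have e2 := syn_err w j (by omega) hwj hwj1
  rw [heq] at e1
  set A := syn (w.take j ++ 1 :: w.drop (j + 2)) with hA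
  -- syn z + (i+1) = A + t.sum ; syn w + (j+1) = A + (w.drop (j+2)).sum
  have hkey : syn z + ((i + 1) + (w.drop (j+2)).sum) = syn w + ((j + 1) + S + (w.drop (j+2)).sum) := by
    omega
  have hc1 : syn w + ((i + 1) + (w.drop (j+2)).sum) ≡ syn w + ((j + 1) + S + (w.drop (j+2)).sum) [MOD M] := by
    calc syn w + ((i + 1) + (w.drop (j+2)).sum)
        ≡ syn z + ((i + 1) + (w.drop (j+2)).sum) [MOD M] := (hzw.symm).add_right _
      _ = syn w + ((j + 1) + S + (w.drop (j+2)).sum) := hkey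
  have hc2 : (i + 1) ≡ (j + 1 + S) [MOD M] :=
    Nat.ModEq.add_right_cancel' _ (Nat.ModEq.add_left_cancel' _ hc1)
  -- conclude
  have hiM : i + 1 < M := by omega
  have hjM : j + 1 + S ≤ M := by omega
  have := hc2
  unfold Nat.ModEq at this
  rw [Nat.mod_eq_of_lt hiM] at this
  rcases lt_or_eq_of_le hjM with h | h
  · rw [Nat.mod_eq_of_lt h] at this; omega
  · rw [h, Nat.mod_self] at this; omega

/-- Lemma 2: the binary code `C_3(n;d) = {z ∈ Σ_2^n : Syn(z) ≡ d (mod 2n-3)}`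
corrects the error type `00 → 1` and locates the error position: if `z, w ∈ C_3(n;d)`,
`z'` is obtained from `z` by replacing two adjacent zeros starting at (0-indexed) position `i`
by a single `1`, `w'` is obtained from `w` likewise at position `j`, and `z' = w'`,
then `z = w` and `i = j`. -/
theorem stmt5 (n d : ℕ) (hn : 3 ≤ n)
    (z w : List ℕ)
    (hzlen : z.length = n) (hzb : ∀ e ∈ z, e < 2) (hzs : syn z ≡ d [MOD 2 * n - 3])
    (hwlen : w.length = n) (hwb : ∀ e ∈ w, e < 2) (hws : syn w ≡ d [MOD 2 * n - 3])
    (i j : ℕ) (hi : i + 1 < n) (hj : j + 1 < n)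
    (hzi : z.getD i 0 = 0) (hzi1 : z.getD (i + 1) 0 = 0)
    (hwj : w.getD j 0 = 0) (hwj1 : w.getD (j + 1) 0 = 0)
    (heq : z.take i ++ 1 :: z.drop (i + 2) = w.take j ++ 1 :: w.drop (j + 2)) :
    z = w ∧ i = j := by
  have hij : i = j := by
    rcases le_total i j with h | h
    · exact key n hn z w hzlen hzb hwlen (hzs.trans hws.symm) i j hi hj hzi hzi1 hwj hwj1 heq h
    · exact (key n hn w z hwlen hwb hzlen (hws.trans hzs.symm) j i hj hi hwj hwj1 hzi hzi1 heq.symm h).symm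
  subst hij
  refine ⟨?_, rfl⟩
  have hlen : (z.take i).length = (w.take i).length := by simp; omega
  obtain ⟨h1, h2⟩ := List.append_inj heq hlen
  have h3 : z.drop (i + 2) = w.drop (i + 2) := by
    injection h2
  rw [decomp z i (by omega), decomp w i (by omega), h1, h3, hzi, hzi1, hwj, hwj1]
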